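/- Let n ≥ 1 and K ≥ 1 be integers, let h_0,…,h_K ∈ ℂ, let S ∈ ℂ^{n×n}, let 0 < ε < 1, and let E ∈ ℂ^{n×n} satisfy ‖E‖₂ ≤ ε. Define M̄ = max_{0≤ℓ≤K} Σ_{k=ℓ}^K |h_k| C(k,ℓ) ‖S‖₂^{k−ℓ}. Then ρ(H_h(S+E) − H_h(S)) ≤ ‖H_h(S+E) − H_h(S)‖₂ ≤ M̄ · ε(1 − ε^K)/(1 − ε). -/

import Mathlib

open scoped BigOperators
open Matrix

/-- Operator 2-norm (largest singular value) of a complex matrix. -/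
noncomputable def opNorm {m n : ℕ} (A : Matrix (Fin m) (Fin n) ℂ) : ℝ :=
  ‖LinearMap.toContinuousLinearMap (Matrix.toEuclideanLin A)‖

/-- Euclidean norm of a complex vector. -/
noncomputable def vnorm {n : ℕ} (x : Fin n → ℂ) : ℝ :=
  ‖(WithLp.equiv 2 (Fin n → ℂ)).symm x‖

/-- Spectral radius: maximum modulus of the eigenvalues. -/
noncomputable def specRad {n : ℕ} (A : Matrix (Fin n) (Fin n) ℂ) : ℝ :=
  sSup ((fun z : ℂ => ‖z‖) '' spectrum ℂ A)

/-- ε-pseudospectrum. -/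
def pseudoSpec {n : ℕ} (ε : ℝ) (A : Matrix (Fin n) (Fin n) ℂ) : Set ℂ :=
  {z | ∃ E : Matrix (Fin n) (Fin n) ℂ, opNorm E ≤ ε ∧ z ∈ spectrum ℂ (A + E)}

/-- ε-pseudospectral radius. -/
noncomputable def pseudoSpecRad {n : ℕ} (ε : ℝ) (A : Matrix (Fin n) (Fin n) ℂ) : ℝ :=
  sSup ((fun z : ℂ => ‖z‖) '' pseudoSpec ε A)

/-- The Bernstein change-of-basis matrix M(K,R):
`M_{i,j} = (−1)^{i−j} C(K,j) C(K−j, i−j) / R^i` for `j ≤ i`, and `0` otherwise. -/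
noncomputable def Mmat (K : ℕ) (R : ℝ) : Matrix (Fin (K+1)) (Fin (K+1)) ℝ :=
  fun i j =>
    if (j : ℕ) ≤ (i : ℕ) then
      ((-1 : ℝ) ^ ((i : ℕ) - (j : ℕ)) * (K.choose j) *
        ((K - (j : ℕ)).choose ((i : ℕ) - (j : ℕ)))) / R ^ (i : ℕ)
    else 0

/-- Graph filter `H_h(S) = Σ_{k=0}^K h_k S^k`. -/
noncomputable def filt {n : ℕ} (K : ℕ) (h : ℕ → ℂ) (S : Matrix (Fin n) (Fin n) ℂ) :
    Matrix (Fin n) (Fin n) ℂ :=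
  ∑ k ∈ Finset.range (K+1), h k • S ^ k

/-- Vector of absolute values of the first K+1 coefficients. -/
noncomputable def absVec (K : ℕ) (h : ℕ → ℂ) : Fin (K+1) → ℝ := fun i => ‖h i‖

/-- The constant `M̄ = max_{0≤ℓ≤K} Σ_{k=ℓ}^K |h_k| C(k,ℓ) ‖S‖₂^{k−ℓ}`. -/
noncomputable def Mbar {n : ℕ} (K : ℕ) (h : ℕ → ℂ) (S : Matrix (Fin n) (Fin n) ℂ) : ℝ :=
  ⨆ ℓ : Fin (K+1), ∑ k ∈ Finset.Icc (ℓ : ℕ) K,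
    ‖h k‖ * (k.choose ℓ) * opNorm S ^ (k - (ℓ : ℕ))

/-- Complex ReLU: `CReLU(x + iy) = max(x,0) + i max(y,0)`. -/
noncomputable def CReLU (z : ℂ) : ℂ := ⟨max z.re 0, max z.im 0⟩

/-- Entrywise complex ReLU on vectors. -/
noncomputable def CReLUv {n : ℕ} (x : Fin n → ℂ) : Fin n → ℂ := fun i => CReLU (x i)

/-!
Write `D = H_h(S+E) - H_h(S) = Σ_k h_k ((S+E)^k - S^k)`. Expanding `(S+E)^k - S^k` as a sum of
words in `S` and `E` containing `E` at least once gives `‖(S+E)^k - S^k‖ ≤ (‖S‖+ε)^k - ‖S‖^k`.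
Expanding the right side binomially and regrouping by the power `ε^ℓ`, the coefficient of `ε^ℓ`
is exactly the `ℓ`-th sum in `M̄`, so `‖D‖ ≤ M̄ Σ_{ℓ=1}^K ε^ℓ`. Every spectral value `z` of `D`
satisfies `|z| ≤ ‖D‖ ‖1‖ ≤ ‖D‖`.
-/

open Finset

section NormedRing

variable {A : Type*} [NormedRing A]

-- `NormOneClass` fails for operators on `ℂ^0`, so `norm_pow_le` is not available.
theorem norm_pow_mul_le (x y : A) (k : ℕ) : ‖x ^ k * y‖ ≤ ‖x‖ ^ k * ‖y‖ := by
  induction k with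
  | zero => simp
  | succ k ih =>
    calc ‖x ^ (k + 1) * y‖ = ‖x * (x ^ k * y)‖ := by rw [pow_succ', mul_assoc]
      _ ≤ ‖x‖ * (‖x‖ ^ k * ‖y‖) := by grw [norm_mul_le, ih]
      _ = ‖x‖ ^ (k + 1) * ‖y‖ := by ring

theorem norm_add_pow_sub_pow_le (x y : A) (k : ℕ) :
    ‖(x + y) ^ k - x ^ k‖ ≤ (‖x‖ + ‖y‖) ^ k - ‖x‖ ^ k := by
  induction k with
  | zero => simp
  | succ k ih =>
    have hsplit : (x + y) ^ (k + 1) - x ^ (k + 1) =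
        ((x + y) ^ k - x ^ k) * (x + y) + x ^ k * y := by
      rw [pow_succ, pow_succ]; noncomm_ring
    calc ‖(x + y) ^ (k + 1) - x ^ (k + 1)‖
        ≤ ‖(x + y) ^ k - x ^ k‖ * ‖x + y‖ + ‖x‖ ^ k * ‖y‖ := by
          rw [hsplit]; grw [norm_add_le, norm_mul_le, norm_pow_mul_le]
      _ ≤ ((‖x‖ + ‖y‖) ^ k - ‖x‖ ^ k) * (‖x‖ + ‖y‖) + ‖x‖ ^ k * ‖y‖ := by
          have hdiff_nonneg : 0 ≤ (‖x‖ + ‖y‖) ^ k - ‖x‖ ^ k := (norm_nonneg _).trans ih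
          grw [ih, norm_add_le]
      _ = (‖x‖ + ‖y‖) ^ (k + 1) - ‖x‖ ^ (k + 1) := by ring

end NormedRing

theorem add_pow_sub_pow_eq_sum_Icc (a e : ℝ) (k : ℕ) :
    (a + e) ^ k - a ^ k = ∑ ℓ ∈ Icc 1 k, (k.choose ℓ : ℝ) * a ^ (k - ℓ) * e ^ ℓ := by
  rw [add_comm a e, add_pow, ← Nat.Ico_zero_eq_range,
    sum_eq_sum_Ico_succ_bot (by omega : 0 < k + 1), zero_add, Ico_add_one_right_eq_Icc]
  simp only [pow_zero, one_mul, Nat.sub_zero, Nat.choose_zero_right, Nat.cast_one, mul_one,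
    add_sub_cancel_left]
  exact sum_congr rfl fun ℓ _ => by ring

theorem sum_mul_add_pow_sub_pow (c : ℕ → ℝ) (a e : ℝ) (K : ℕ) :
    ∑ k ∈ range (K + 1), c k * ((a + e) ^ k - a ^ k) =
      ∑ ℓ ∈ Icc 1 K, (∑ k ∈ Icc ℓ K, c k * k.choose ℓ * a ^ (k - ℓ)) * e ^ ℓ := by
  simp_rw [add_pow_sub_pow_eq_sum_Icc, mul_sum, sum_mul]
  rw [sum_comm' (s' := fun ℓ => Icc ℓ K) (t' := Icc 1 K)]
  · exact sum_congr rfl fun ℓ _ => sum_congr rfl fun k _ => by ring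
  · intro k ℓ
    simp only [mem_range, mem_Icc]
    omega

theorem sum_Icc_one_pow_eq (ε : ℝ) (hε : ε ≠ 1) (K : ℕ) :
    ∑ ℓ ∈ Icc 1 K, ε ^ ℓ = ε * (1 - ε ^ K) / (1 - ε) := by
  rw [← Ico_add_one_right_eq_Icc, geom_sum_Ico' hε (by omega)]
  ring

theorem norm_sum_smul_add_pow_sub_pow_le {𝕜 A : Type*} [NormedField 𝕜] [NormedRing A]
    [NormedSpace 𝕜 A] (c : ℕ → 𝕜) (x y : A) (K : ℕ) {ε : ℝ} (hy : ‖y‖ ≤ ε) :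
    ‖∑ k ∈ range (K + 1), c k • ((x + y) ^ k - x ^ k)‖ ≤
      ∑ ℓ ∈ Icc 1 K, (∑ k ∈ Icc ℓ K, ‖c k‖ * k.choose ℓ * ‖x‖ ^ (k - ℓ)) * ε ^ ℓ := by
  rw [← sum_mul_add_pow_sub_pow]
  calc _ ≤ ∑ k ∈ range (K + 1), ‖c k‖ * ‖(x + y) ^ k - x ^ k‖ :=
        (norm_sum_le _ _).trans (sum_le_sum fun k _ => norm_smul_le _ _)
    _ ≤ _ := by
      gcongr with k
      grw [norm_add_pow_sub_pow_le, hy]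

section Matrix

variable {n : ℕ}

theorem opNorm_eq_norm_toEuclideanCLM (A : Matrix (Fin n) (Fin n) ℂ) :
    opNorm A = ‖Matrix.toEuclideanCLM (𝕜 := ℂ) A‖ := rfl

theorem specRad_le_opNorm (A : Matrix (Fin n) (Fin n) ℂ) : specRad A ≤ opNorm A := by
  refine Real.sSup_le ?_ (norm_nonneg _)
  rintro _ ⟨z, hz, rfl⟩
  rw [← AlgEquiv.spectrum_eq (Matrix.toEuclideanCLM (𝕜 := ℂ) (n := Fin n))] at hz
  calc ‖z‖ ≤ opNorm A * ‖(1 : EuclideanSpace ℂ (Fin n) →L[ℂ] EuclideanSpace ℂ (Fin n))‖ :=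
        spectrum.norm_le_norm_mul_of_mem hz
    _ ≤ opNorm A := mul_le_of_le_one_right (norm_nonneg _) ContinuousLinearMap.norm_id_le

theorem toEuclideanCLM_filt (K : ℕ) (h : ℕ → ℂ) (T : Matrix (Fin n) (Fin n) ℂ) :
    Matrix.toEuclideanCLM (𝕜 := ℂ) (filt K h T) =
      ∑ k ∈ range (K + 1), h k • Matrix.toEuclideanCLM (𝕜 := ℂ) T ^ k := by
  simp only [filt, map_sum, map_smul, map_pow]

theorem le_Mbar (K : ℕ) (h : ℕ → ℂ) (S : Matrix (Fin n) (Fin n) ℂ) {ℓ : ℕ} (hℓ : ℓ ≤ K) :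
    ∑ k ∈ Icc ℓ K, ‖h k‖ * k.choose ℓ * opNorm S ^ (k - ℓ) ≤ Mbar K h S :=
  le_ciSup (f := fun ℓ : Fin (K + 1) =>
      ∑ k ∈ Icc (ℓ : ℕ) K, ‖h k‖ * k.choose ℓ * opNorm S ^ (k - ℓ))
    (Set.finite_range _).bddAbove ⟨ℓ, Nat.lt_succ_of_le hℓ⟩

end Matrix

theorem stmt_1_general {n K : ℕ} (h : ℕ → ℂ)
    (S : Matrix (Fin n) (Fin n) ℂ) (ε : ℝ) (hε1 : ε < 1)
    (E : Matrix (Fin n) (Fin n) ℂ) (hE : opNorm E ≤ ε) :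
    specRad (filt K h (S + E) - filt K h S) ≤ opNorm (filt K h (S + E) - filt K h S) ∧
    opNorm (filt K h (S + E) - filt K h S) ≤ Mbar K h S * (ε * (1 - ε ^ K) / (1 - ε)) := by
  refine ⟨specRad_le_opNorm _, ?_⟩
  have hε0 : 0 ≤ ε := (norm_nonneg _).trans hE
  set φ := Matrix.toEuclideanCLM (𝕜 := ℂ) (n := Fin n)
  calc opNorm (filt K h (S + E) - filt K h S)
      = ‖∑ k ∈ range (K + 1), h k • ((φ S + φ E) ^ k - φ S ^ k)‖ := by
        simp only [opNorm_eq_norm_toEuclideanCLM, map_sub, map_add, toEuclideanCLM_filt,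
          ← sum_sub_distrib, smul_sub, φ]
    _ ≤ ∑ ℓ ∈ Icc 1 K, (∑ k ∈ Icc ℓ K, ‖h k‖ * k.choose ℓ * opNorm S ^ (k - ℓ)) * ε ^ ℓ :=
        norm_sum_smul_add_pow_sub_pow_le h _ _ K hE
    _ ≤ ∑ ℓ ∈ Icc 1 K, Mbar K h S * ε ^ ℓ := by
        gcongr with ℓ hℓ
        exact le_Mbar K h S (mem_Icc.1 hℓ).2
    _ = Mbar K h S * (ε * (1 - ε ^ K) / (1 - ε)) := by
        rw [← mul_sum, sum_Icc_one_pow_eq ε hε1.ne K]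

/-- **Bound of GSO Permutation Error.** -/
theorem stmt_1 {n K : ℕ} (hn : 1 ≤ n) (hK : 1 ≤ K) (h : ℕ → ℂ)
    (S : Matrix (Fin n) (Fin n) ℂ) (ε : ℝ) (hε0 : 0 < ε) (hε1 : ε < 1)
    (E : Matrix (Fin n) (Fin n) ℂ) (hE : opNorm E ≤ ε) :
    specRad (filt K h (S + E) - filt K h S) ≤ opNorm (filt K h (S + E) - filt K h S) ∧
    opNorm (filt K h (S + E) - filt K h S) ≤ Mbar K h S * (ε * (1 - ε ^ K) / (1 - ε)) :=
  stmt_1_general h S ε hε1 E hE
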